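/- Let R be a commutative ring of Krull dimension 0. Then R is Cohen-Macaulay: R admits no parameter sequences of positive length, hence every strong parameter sequence (necessarily empty) is a regular sequence. -/

import Mathlib

/-- The natural map between localizations of a module at powers of two elements
`a ∣ b`, sending `m/1` to `m/1`. -/

noncomputable def cechLoc {R : Type*} [CommRing R] {M : Type*} [AddCommGroup M] [Module R M]
    (a b : R) (hab : a ∣ b) :
    LocalizedModule (Submonoid.powers a) M →ₗ[R] LocalizedModule (Submonoid.powers b) M :=
  LocalizedModule.lift _ (LocalizedModule.mkLinearMap (Submonoid.powers b) M) (by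
    rintro ⟨s, n, rfl⟩
    obtain ⟨c, rfl⟩ := hab
    set f := algebraMap R (Module.End R (LocalizedModule (Submonoid.powers (a * c)) M)) with hf
    obtain ⟨u, hu⟩ := IsLocalizedModule.map_units
      (LocalizedModule.mkLinearMap (Submonoid.powers (a * c)) M)
      (⟨(a * c) ^ n, n, rfl⟩ : Submonoid.powers (a * c))
    have hcomm : Commute (f (a ^ n)) ↑u := by
      have : Commute (f (a ^ n)) (f ((a * c) ^ n)) := by
        simp only [Commute, SemiconjBy, ← map_mul, mul_comm]
      rwa [← hu] at this
    refine ⟨⟨f (a ^ n), f (c ^ n) * ↑u⁻¹, ?_, ?_⟩, rfl⟩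
    · rw [← mul_assoc, ← map_mul, ← mul_pow, ← hu]
      exact u.mul_inv
    · rw [mul_assoc, ← (hcomm.units_inv_right).eq, ← mul_assoc, ← map_mul]
      have : c ^ n * a ^ n = (a * c) ^ n := by ring
      rw [this, ← hu]
      exact u.mul_inv)

open scoped BigOperators
open Classical

noncomputable section

universe u
variable {R : Type u} [CommRing R]

/-- Degree `i` term of the Čech complex of the sequence `x` with coefficients in `M`:
the product over `i`-element subsets `t` of the index set of the localization of `M`
at the product of the `x j` for `j ∈ t`. -/
noncomputable abbrev CechC {ℓ : ℕ} (x : Fin ℓ → R) (M : Type*) [AddCommGroup M] [Module R M]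
    (i : ℕ) : Type _ :=
  ∀ t : {t : Finset (Fin ℓ) // t.card = i}, LocalizedModule (Submonoid.powers (∏ j ∈ t.1, x j)) M

/-- The Čech differential `C^i → C^{i+1}`: the alternating sum of the further-localization
maps. -/
noncomputable def cechD {ℓ : ℕ} (x : Fin ℓ → R) (M : Type*) [AddCommGroup M] [Module R M]
    (i : ℕ) : CechC x M i →ₗ[R] CechC x M (i + 1) where
  toFun m t := ∑ j ∈ (t.1).attach,
    ((-1 : ℤ) ^ ((t.1.filter (· < j.1)).card)) •
      cechLoc (∏ k ∈ t.1.erase j.1, x k) (∏ k ∈ t.1, x k)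
        (Finset.prod_dvd_prod_of_subset _ _ _ (Finset.erase_subset _ _))
        (m ⟨t.1.erase j.1, by rw [Finset.card_erase_of_mem j.2, t.2]; omega⟩)
  map_add' := by
    intro a b
    funext t
    simp [Pi.add_apply, map_add, smul_add, Finset.sum_add_distrib]
    rw [← Finset.sum_add_distrib]
    refine Finset.sum_congr rfl fun j _ => ?_
    first | exact smul_add _ _ _ | exact zsmul_add _ _ _ | module
  map_smul' := by
    intro r a
    funext t
    simp [Pi.smul_apply, map_smul, Finset.smul_sum, smul_comm r]

/-- The submodule of Čech coboundaries in degree `i`. -/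
noncomputable def cechPrevRange {ℓ : ℕ} (x : Fin ℓ → R) (M : Type*) [AddCommGroup M]
    [Module R M] : (i : ℕ) → Submodule R (CechC x M i)
  | 0 => ⊥
  | (i + 1) => LinearMap.range (cechD x M i)

/-- The `i`-th Čech cohomology of `M` with respect to the sequence `x`:
cocycles modulo coboundaries. -/
noncomputable abbrev CechH {ℓ : ℕ} (x : Fin ℓ → R) (M : Type*) [AddCommGroup M] [Module R M]
    (i : ℕ) : Type _ :=
  LinearMap.ker (cechD x M i) ⧸
    (cechPrevRange x M i).comap (LinearMap.ker (cechD x M i)).subtype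


/-- Degree `i` term of the Koszul complex on `ℓ` elements: free module indexed by
`i`-element subsets of the index set. -/
abbrev KoszulC (R : Type*) [CommRing R] (ℓ i : ℕ) : Type _ :=
  {t : Finset (Fin ℓ) // t.card = i} → R

/-- The Koszul differential `K_{i+1} → K_i` for the sequence `x^k = x_1^k, ..., x_ℓ^k`. -/
noncomputable def koszulD {ℓ : ℕ} (x : Fin ℓ → R) (k : ℕ) (i : ℕ) :
    KoszulC R ℓ (i + 1) →ₗ[R] KoszulC R ℓ i where
  toFun m s := ∑ j ∈ (s.1ᶜ).attach,
    ((-1 : ℤ) ^ ((s.1.filter (· < j.1)).card)) •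
      ((x j.1 ^ k) * m ⟨insert j.1 s.1, by
        rw [Finset.card_insert_of_notMem (Finset.mem_compl.mp j.2), s.2]⟩)
  map_add' := by
    intro a b
    funext s
    simp [mul_add, smul_add, Finset.sum_add_distrib]
  map_smul' := by
    intro r a
    funext s
    simp [Finset.mul_sum, mul_smul_comm, mul_left_comm]
  
/-- The standard transition chain map `K(x^m) → K(x^n)` (for `n ≤ m`) in degree `i`:
multiplication on the component indexed by `t` by `∏_{j ∈ t} x_j^{m-n}`. -/
noncomputable def koszulTr {ℓ : ℕ} (x : Fin ℓ → R) (m n i : ℕ) :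
    KoszulC R ℓ i →ₗ[R] KoszulC R ℓ i where
  toFun z t := (∏ j ∈ t.1, x j ^ (m - n)) * z t
  map_add' := by intro a b; funext t; simp [mul_add]
  map_smul' := by intro r a; funext t; simp; ring

/-- A finite sequence `x` is weakly proregular if for each `n` there is `m ≥ n` such that
the transition maps `H_i(x^m; R) → H_i(x^n; R)` on Koszul homology vanish for all `i ≥ 1`;
equivalently, the transition image of every cycle is a boundary. -/
def WeaklyProregular {ℓ : ℕ} (x : Fin ℓ → R) : Prop :=
  ∀ n : ℕ, 1 ≤ n → ∃ m, n ≤ m ∧ ∀ i : ℕ, ∀ z : KoszulC R ℓ (i + 1),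
    koszulD x m i z = 0 →
      ∃ b : KoszulC R ℓ (i + 1 + 1), koszulD x n (i + 1) b = koszulTr x m n (i + 1) z

/-- The height of an ideal: the infimum of the heights of the primes containing it. -/
noncomputable def idealHeight (I : Ideal R) : ℕ∞ :=
  ⨅ p : {p : PrimeSpectrum R // I ≤ p.asIdeal}, Order.height p.1


/-- A finite sequence `x` (given as a list `l`) is a parameter sequence on `R` if it is
weakly proregular, generates a proper ideal, and the localized top Čech cohomology
`H^{ℓ(x)}_x(R)_p` is nonzero for every prime `p` containing `(x)R`. -/
def IsParamSeq (l : List R) : Prop :=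
  WeaklyProregular l.get ∧ Ideal.span {a | a ∈ l} ≠ ⊤ ∧
    ∀ p : PrimeSpectrum R, Ideal.span {a | a ∈ l} ≤ p.asIdeal →
      Nontrivial (LocalizedModule p.asIdeal.primeCompl (CechH l.get R l.length))

/-- A strong parameter sequence: every initial segment is a parameter sequence. -/
def IsStrongParamSeq (l : List R) : Prop :=
  ∀ i : ℕ, i ≤ l.length → IsParamSeq (l.take i)


/-- `PossiblyImproperRegular R l N`: the list `l` is a possibly improper regular sequence on
the `R`-module `N`. -/
def PossiblyImproperRegular (R : Type u) [CommRing R] :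
    List R → (N : Type u) → [inst : AddCommGroup N] → [inst2 : Module R N] → Prop
  | [], _, _, _ => True
  | a :: as, N, _, _ => (∀ m : N, a • m = 0 → m = 0) ∧
      PossiblyImproperRegular R as (N ⧸ (Ideal.span {a} • (⊤ : Submodule R N)))

variable (R) in
/-- The list `l` is a regular sequence on the ring `R`. -/
def IsRegularSeq (l : List R) : Prop :=
  PossiblyImproperRegular R l R ∧ Ideal.span {a | a ∈ l} ≠ ⊤

/-! If `x` is a nonempty parameter sequence, choose a maximal ideal `p ⊇ (x)`; in dimension zero
it is a minimal prime, so `s = x₁⋯x_ℓ ∈ p` is nilpotent in `R_p`, i.e. `u * s ^ n = 0` for some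
`u ∉ p`. Multiplication by `s` is onto on `H^ℓ_x(R)`, hence `u` kills it and `H^ℓ_x(R)_p = 0`. -/

theorem LocalizedModule.smul_surjective_of_mem {M : Type*} [AddCommGroup M] [Module R M]
    {S : Submonoid R} {s : R} (hs : s ∈ S) :
    Function.Surjective (s • · : LocalizedModule S M → LocalizedModule S M) :=
  ((Module.End.isUnit_iff _).mp
    (IsLocalizedModule.map_units (LocalizedModule.mkLinearMap S M) ⟨s, hs⟩)).2

theorem Ideal.exists_mul_pow_eq_zero_of_mem_minimalPrimes {p : Ideal R}
    (hp : p ∈ minimalPrimes R) {s : R} (hs : s ∈ p) : ∃ u ∉ p, ∃ n : ℕ, u * s ^ n = 0 := by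
  have : p.IsPrime := hp.1.1
  have hnil : algebraMap R (Localization.AtPrime p) s ∈
      ((⊥ : Ideal R).map (algebraMap R (Localization.AtPrime p))).radical := by
    rw [IsLocalization.AtPrime.radical_map_of_mem_minimalPrimes _ p ⊥ hp]
    exact Ideal.mem_map_of_mem _ hs
  obtain ⟨n, hn⟩ := hnil
  rw [Ideal.map_bot, Ideal.mem_bot, ← map_pow, IsLocalization.map_eq_zero_iff p.primeCompl] at hn
  obtain ⟨⟨u, hu⟩, hun⟩ := hn
  exact ⟨u, hu, n, hun⟩

instance isEmpty_card_eq_succ {ℓ : ℕ} : IsEmpty {t : Finset (Fin ℓ) // t.card = ℓ + 1} :=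
  ⟨fun t => by simpa [t.2] using Finset.card_le_univ t.1⟩

section TopCech

variable {ℓ : ℕ} (x : Fin ℓ → R) (M : Type*) [AddCommGroup M] [Module R M]

/-- In top degree the Čech complex is the single module `M_{x₁⋯x_ℓ}` and every cochain is a
cocycle. -/
theorem cechH_top_smul_surjective :
    Function.Surjective ((∏ j, x j) • · : CechH x M ℓ → CechH x M ℓ) := by
  intro z
  obtain ⟨⟨c, -⟩, rfl⟩ := Submodule.Quotient.mk_surjective _ z
  have hdiv : ∀ t : {t : Finset (Fin ℓ) // t.card = ℓ},
      ∃ m : LocalizedModule (Submonoid.powers (∏ j ∈ t.1, x j)) M, (∏ j, x j) • m = c t := by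
    intro t
    have ht : t.1 = Finset.univ := Finset.eq_univ_of_card _ (by rw [t.2, Fintype.card_fin])
    exact ht ▸ LocalizedModule.smul_surjective_of_mem (Submonoid.mem_powers _) (c t)
  choose c' hc' using hdiv
  have hcocycle : c' ∈ LinearMap.ker (cechD x M ℓ) :=
    LinearMap.mem_ker.mpr (Subsingleton.elim _ _)
  refine ⟨Submodule.Quotient.mk ⟨c', hcocycle⟩, ?_⟩
  show (∏ j, x j) • Submodule.Quotient.mk _ = _
  rw [← Submodule.Quotient.mk_smul]
  congr 1
  ext t
  exact hc' t

theorem cechH_top_smul_eq_zero {u : R} {n : ℕ} (hu : u * (∏ j, x j) ^ n = 0)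
    (z : CechH x M ℓ) : u • z = 0 := by
  obtain ⟨w, rfl⟩ := (cechH_top_smul_surjective x M).iterate n z
  rw [smul_iterate_apply, smul_smul, hu, zero_smul]

end TopCech

theorem IsParamSeq.eq_nil (h0 : ringKrullDim R = 0) {l : List R} (hl : IsParamSeq l) :
    l = [] := by
  by_contra hne
  obtain ⟨-, hproper, hloc⟩ := hl
  obtain ⟨p, hp, hle⟩ := Ideal.exists_le_maximal _ hproper
  have hprod : ∏ j, l.get j ∈ p :=
    Ideal.prod_mem p (Finset.mem_univ ⟨0, List.length_pos_iff.mpr hne⟩)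
      (hle (Ideal.subset_span (l.get_mem _)))
  have : Ring.KrullDimLE 0 R := Ring.krullDimLE_iff.mpr h0.le
  obtain ⟨u, hu, n, hun⟩ := Ideal.exists_mul_pow_eq_zero_of_mem_minimalPrimes
    (p.mem_minimalPrimes_of_krullDimLE_zero) hprod
  have := hloc ⟨p, hp.isPrime⟩ hle
  refine not_subsingleton (LocalizedModule p.primeCompl (CechH l.get R l.length)) ?_
  exact LocalizedModule.subsingleton_iff.mpr fun z => ⟨u, hu, cechH_top_smul_eq_zero l.get R hun z⟩

/-- A zero-dimensional commutative ring is Cohen-Macaulay: it admits no parameter sequence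
of positive length, and every strong parameter sequence (necessarily empty) is a regular
sequence. -/
theorem stmt_13 {R : Type*} [CommRing R] (h0 : ringKrullDim R = 0) :
    (∀ l : List R, IsParamSeq l → l = []) ∧
    (∀ l : List R, IsStrongParamSeq l → IsRegularSeq R l) := by
  refine ⟨fun l hl => hl.eq_nil h0, fun l hl => ?_⟩
  have hparam : IsParamSeq l := by simpa using hl l.length le_rfl
  obtain rfl := hparam.eq_nil h0
  exact ⟨trivial, hparam.2.1⟩

end
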